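/- One step of ProxSkip satisfies the descent inequality: given x_t, h_t ∈ ℝ^d, let x̂ = x_t - γ(∇f(x_t) - h_t), and with probability p set x_{t+1} = prox_{(γ/p)ψ}(x̂ - (γ/p)h_t), else x_{t+1} = x̂; set h_{t+1} = h_t + (p/γ)(x_{t+1} - x̂). Then E[‖x_{t+1} - x⋆‖² + (γ²/p²)‖h_{t+1} - h⋆‖²] ≤ ‖w_t - w⋆‖² + (1 - p²)(γ²/p²)‖h_t - h⋆‖², where w_t = x_t - γ∇f(x_t), w⋆ = x⋆ - γ∇f(x⋆), h⋆ = ∇f(x⋆). -/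

import Mathlib

/-!
A prox point `q` of `x` is characterised by the variational inequality
`⟪x - q, y - q⟫ ≤ α (ψ y - ψ q)` (the first-order condition of the prox objective along segments),
which makes the prox map firmly nonexpansive. The same first-order argument applied to `f + ψ`
shows that `x⋆` is the prox point of `x⋆ - α ∇f(x⋆)`. With `α = γ / p` and
`Δ = (x̂ - α hₜ) - (x⋆ - α h⋆)`, the control-variate error `α (h_{t+1} - h⋆)` is exactly the
residual `(x_{t+1} - x⋆) - Δ`, so firm nonexpansiveness bounds the prox branch by `‖Δ‖²`.
Averaging with the skip branch, the cross terms `⟪w_t - w⋆, h_t - h⋆⟫` cancel.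
-/
open RealInnerProductSpace
noncomputable section
abbrev Euc (d : ℕ) := EuclideanSpace ℝ (Fin d)

/-- `ψ` is proper, closed (lower semicontinuous) and convex, with values in `ℝ ∪ {+∞}`. -/
def ProperClosedConvex {d : ℕ} (ψ : Euc d → EReal) : Prop :=
  (∃ x, ψ x ≠ ⊤) ∧ (∀ x, ψ x ≠ ⊥) ∧ LowerSemicontinuous ψ ∧
    ∀ x y : Euc d, ∀ a b : ℝ, 0 ≤ a → 0 ≤ b → a + b = 1 →
      ψ (a • x + b • y) ≤ (a : EReal) * ψ x + (b : EReal) * ψ y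

/-- `q = prox_{αψ}(x)`, i.e. `q` minimizes `y ↦ ½‖y - x‖² + α ψ(y)`. -/
def IsProxPt {d : ℕ} (ψ : Euc d → EReal) (α : ℝ) (x q : Euc d) : Prop :=
  ∀ y : Euc d, (((1:ℝ)/2 * ‖q - x‖^2 : ℝ) : EReal) + (α : EReal) * ψ q ≤
    (((1:ℝ)/2 * ‖y - x‖^2 : ℝ) : EReal) + (α : EReal) * ψ y

open Filter Topology

section InnerProduct

variable {E : Type*} [NormedAddCommGroup E] [InnerProductSpace ℝ E]

theorem norm_sq_add_norm_sub_sq_le {u v : E} (h : ‖u‖ ^ 2 ≤ ⟪v, u⟫) :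
    ‖u‖ ^ 2 + ‖u - v‖ ^ 2 ≤ ‖v‖ ^ 2 := by
  rw [norm_sub_sq_real, real_inner_comm]
  linarith

theorem bernoulli_mix_norm_sq (u v : E) (c p : ℝ) (hp : p ≠ 0) :
    p * ‖u + (c - c / p) • v‖ ^ 2 + (1 - p) * (‖u + c • v‖ ^ 2 + c ^ 2 / p ^ 2 * ‖v‖ ^ 2)
      = ‖u‖ ^ 2 + (1 - p ^ 2) * (c ^ 2 / p ^ 2) * ‖v‖ ^ 2 := by
  simp only [norm_add_sq_real, real_inner_smul_right, norm_smul, Real.norm_eq_abs, mul_pow,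
    sq_abs]
  field_simp
  ring

theorem hasGradientAt_half_norm_sub_sq [CompleteSpace E] (x q : E) :
    HasGradientAt (fun y => 1 / 2 * ‖y - x‖ ^ 2) (q - x) q := by
  rw [hasGradientAt_iff_hasFDerivAt]
  refine ((((hasFDerivAt_id q).sub_const x).norm_sq).const_mul (1 / 2)).congr_fderiv ?_
  ext y
  simp

end InnerProduct

theorem le_of_forall_mul_le_sub {g : ℝ → ℝ} {D c : ℝ} (hg : HasDerivAt g D 0)
    (h : ∀ t, 0 < t → t ≤ 1 → t * c ≤ g t - g 0) : c ≤ D := by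
  have hslope : Tendsto (slope g 0) (𝓝[>] 0) (𝓝 D) :=
    (hasDerivAt_iff_tendsto_slope.mp hg).mono_left (nhdsWithin_mono 0 fun t ht => ne_of_gt ht)
  refine ge_of_tendsto hslope ?_
  filter_upwards [Ioc_mem_nhdsGT (zero_lt_one' ℝ)] with t ht
  rw [slope_def_field, sub_zero, le_div_iff₀ ht.1, mul_comm]
  exact h t ht.1 ht.2

section Prox

variable {d : ℕ} {ψ : Euc d → EReal}

theorem isProxPt_of_inner_le (hbot : ∀ x, ψ x ≠ ⊥) {α : ℝ} (hα : 0 < α) {x q : Euc d}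
    (hq : ψ q ≠ ⊤) (h : ∀ y, ψ y ≠ ⊤ → ⟪x - q, y - q⟫ ≤ α * ((ψ y).toReal - (ψ q).toReal)) :
    IsProxPt ψ α x q := by
  intro y
  by_cases hy : ψ y = ⊤
  · rw [hy, EReal.coe_mul_top_of_pos hα, EReal.add_top_of_ne_bot (EReal.coe_ne_bot _)]
    exact le_top
  have hxy : ‖y - x‖ ^ 2 = ‖q - x‖ ^ 2 - 2 * ⟪x - q, y - q⟫ + ‖y - q‖ ^ 2 := by
    rw [show y - x = (q - x) + (y - q) by abel, norm_add_sq_real, ← neg_sub x q, inner_neg_left]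
    ring
  rw [← EReal.coe_toReal hq (hbot q), ← EReal.coe_toReal hy (hbot y)]
  exact_mod_cast (by nlinarith [h y hy, sq_nonneg ‖y - q‖] :
    1 / 2 * ‖q - x‖ ^ 2 + α * (ψ q).toReal ≤ 1 / 2 * ‖y - x‖ ^ 2 + α * (ψ y).toReal)

end Prox

namespace ProperClosedConvex

variable {d : ℕ} {ψ : Euc d → EReal}

theorem le_segment (hψ : ProperClosedConvex ψ) {x y : Euc d} (hx : ψ x ≠ ⊤) (hy : ψ y ≠ ⊤)
    {t : ℝ} (ht0 : 0 ≤ t) (ht1 : t ≤ 1) :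
    ψ (x + t • (y - x)) ≤ (((1 - t) * (ψ x).toReal + t * (ψ y).toReal : ℝ) : EReal) := by
  have h := hψ.2.2.2 x y (1 - t) t (by linarith) ht0 (by ring)
  rw [← EReal.coe_toReal hx (hψ.2.1 x), ← EReal.coe_toReal hy (hψ.2.1 y)] at h
  rw [show x + t • (y - x) = (1 - t) • x + t • y by module]
  exact_mod_cast h

theorem ne_top_of_isMin (hψ : ProperClosedConvex ψ) {α : ℝ} (hα : 0 < α) {h : Euc d → ℝ}
    {q : Euc d} (hmin : ∀ y, (h q : EReal) + α * ψ q ≤ h y + α * ψ y) : ψ q ≠ ⊤ := by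
  obtain ⟨⟨y, hy⟩, hbot, -⟩ := hψ
  intro hq
  have h := hmin y
  rw [hq, EReal.coe_mul_top_of_pos hα, EReal.add_top_of_ne_bot (EReal.coe_ne_bot _),
    ← EReal.coe_toReal hy (hbot y)] at h
  exact (EReal.coe_lt_top _).not_ge (by exact_mod_cast h)

theorem neg_inner_le_of_isMin (hψ : ProperClosedConvex ψ) {α : ℝ} (hα : 0 ≤ α)
    {h : Euc d → ℝ} {g q : Euc d} (hg : HasGradientAt h g q)
    (hmin : ∀ y, (h q : EReal) + α * ψ q ≤ h y + α * ψ y) (hq : ψ q ≠ ⊤)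
    {y : Euc d} (hy : ψ y ≠ ⊤) :
    -⟪g, y - q⟫ ≤ α * ((ψ y).toReal - (ψ q).toReal) := by
  have hline : HasDerivAt (fun t : ℝ => h (q + t • (y - q))) ⟪g, y - q⟫ 0 := by
    have hlin : HasDerivAt (fun t : ℝ => q + t • (y - q)) (y - q) 0 := by
      simpa using ((hasDerivAt_id (0 : ℝ)).smul_const (y - q)).const_add q
    have hg' : HasFDerivAt h (InnerProductSpace.toDual ℝ _ g) (q + (0 : ℝ) • (y - q)) := by
      simpa using hg.hasFDerivAt
    simpa [Function.comp_def] using hg'.comp_hasDerivAt 0 hlin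
  suffices α * ((ψ q).toReal - (ψ y).toReal) ≤ ⟪g, y - q⟫ by linarith
  refine le_of_forall_mul_le_sub hline fun t ht0 ht1 => ?_
  have hle : (h q : EReal) + α * ψ q ≤
      h (q + t • (y - q)) + α * (((1 - t) * (ψ q).toReal + t * (ψ y).toReal : ℝ) : EReal) :=
    (hmin _).trans (add_le_add_right (mul_le_mul_of_nonneg_left (hψ.le_segment hq hy ht0.le ht1)
      (EReal.coe_nonneg.mpr hα)) _)
  rw [← EReal.coe_toReal hq (hψ.2.1 q)] at hle
  have hle' : h q + α * (ψ q).toReal ≤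
      h (q + t • (y - q)) + α * ((1 - t) * (ψ q).toReal + t * (ψ y).toReal) := by
    exact_mod_cast hle
  simp only [zero_smul, add_zero]
  linarith

theorem isProxPt_sub_smul_of_isMin (hψ : ProperClosedConvex ψ) {f : Euc d → ℝ} {g xstar : Euc d}
    (hg : HasGradientAt f g xstar) (hmin : ∀ y, (f xstar : EReal) + ψ xstar ≤ f y + ψ y)
    {α : ℝ} (hα : 0 < α) : IsProxPt ψ α (xstar - α • g) xstar := by
  have hmin' : ∀ y, (f xstar : EReal) + ((1 : ℝ) : EReal) * ψ xstar ≤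
      f y + ((1 : ℝ) : EReal) * ψ y := by
    simpa using hmin
  have hstar := hψ.ne_top_of_isMin one_pos hmin'
  refine isProxPt_of_inner_le hψ.2.1 hα hstar fun y hy => ?_
  have h := hψ.neg_inner_le_of_isMin zero_le_one hg hmin' hstar hy
  rw [sub_sub_cancel_left, inner_neg_left, inner_smul_left]
  simp only [conj_trivial, one_mul] at h ⊢
  linarith [mul_le_mul_of_nonneg_left h hα.le]

end ProperClosedConvex

namespace IsProxPt

variable {d : ℕ} {ψ : Euc d → EReal} {α : ℝ}

theorem ne_top (hψ : ProperClosedConvex ψ) (hα : 0 < α) {x q : Euc d} (hq : IsProxPt ψ α x q) :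
    ψ q ≠ ⊤ :=
  hψ.ne_top_of_isMin (h := fun y => 1 / 2 * ‖y - x‖ ^ 2) hα hq

theorem inner_le (hψ : ProperClosedConvex ψ) (hα : 0 < α) {x q : Euc d} (hq : IsProxPt ψ α x q)
    {y : Euc d} (hy : ψ y ≠ ⊤) : ⟪x - q, y - q⟫ ≤ α * ((ψ y).toReal - (ψ q).toReal) := by
  have h := hψ.neg_inner_le_of_isMin hα.le (hasGradientAt_half_norm_sub_sq x q) hq
    (hq.ne_top hψ hα) hy
  rwa [← inner_neg_left, neg_sub] at h

theorem norm_sub_sq_le_inner (hψ : ProperClosedConvex ψ) (hα : 0 < α) {a b qa qb : Euc d}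
    (ha : IsProxPt ψ α a qa) (hb : IsProxPt ψ α b qb) :
    ‖qa - qb‖ ^ 2 ≤ ⟪a - b, qa - qb⟫ := by
  have hab := ha.inner_le hψ hα (hb.ne_top hψ hα)
  have hba := hb.inner_le hψ hα (ha.ne_top hψ hα)
  have e : ⟪a - qa, qb - qa⟫ + ⟪b - qb, qa - qb⟫ = ‖qa - qb‖ ^ 2 - ⟪a - b, qa - qb⟫ := by
    rw [← neg_sub qa qb, inner_neg_right, ← sub_eq_neg_add, ← inner_sub_left,
      ← real_inner_self_eq_norm_sq, ← inner_sub_left]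
    congr 1
    abel
  linarith

end IsProxPt

/-- The expectation over the Bernoulli(p) coin is written out as the convex combination of the
prox branch and the skip branch. -/
theorem proxskip_one_step_general {d : ℕ} (f : Euc d → ℝ) (f' : Euc d → Euc d)
    (ψ : Euc d → EReal) (γ p : ℝ)
    (hgrad : ∀ x, HasGradientAt f (f' x) x)
    (hψ : ProperClosedConvex ψ)
    (hγ : 0 < γ) (hp : 0 < p)
    (xstar : Euc d)
    (hmin : ∀ y, ((f xstar : ℝ) : EReal) + ψ xstar ≤ ((f y : ℝ) : EReal) + ψ y)
    (xt ht : Euc d)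
    -- one step of the algorithm:
    (xhat xprox hprox' : Euc d)
    (hxhat : xhat = xt - γ • (f' xt - ht))
    (hxprox : IsProxPt ψ (γ / p) (xhat - (γ / p) • ht) xprox)
    (hhprox : hprox' = ht + (p / γ) • (xprox - xhat)) :
    p * (‖xprox - xstar‖ ^ 2 + γ ^ 2 / p ^ 2 * ‖hprox' - f' xstar‖ ^ 2)
      + (1 - p) * (‖xhat - xstar‖ ^ 2 + γ ^ 2 / p ^ 2 * ‖ht - f' xstar‖ ^ 2)
    ≤ ‖(xt - γ • f' xt) - (xstar - γ • f' xstar)‖ ^ 2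
      + (1 - p ^ 2) * (γ ^ 2 / p ^ 2) * ‖ht - f' xstar‖ ^ 2 := by
  have hα : 0 < γ / p := div_pos hγ hp
  set u := (xt - γ • f' xt) - (xstar - γ • f' xstar)
  set v := ht - f' xstar
  set Δ := (xhat - (γ / p) • ht) - (xstar - (γ / p) • f' xstar)
  have hfirm : ‖xprox - xstar‖ ^ 2 ≤ ⟪Δ, xprox - xstar⟫ :=
    hxprox.norm_sub_sq_le_inner hψ hα (hψ.isProxPt_sub_smul_of_isMin (hgrad xstar) hmin hα)
  have hdual : γ ^ 2 / p ^ 2 * ‖hprox' - f' xstar‖ ^ 2 = ‖(xprox - xstar) - Δ‖ ^ 2 := by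
    have hresidual : hprox' - f' xstar = (p / γ) • ((xprox - xstar) - Δ) := by
      simp only [hhprox, Δ, smul_sub, smul_smul, div_mul_div_cancel₀ hγ.ne', div_self hp.ne',
        one_smul]
      abel
    rw [hresidual, norm_smul, Real.norm_eq_abs, abs_of_pos (div_pos hp hγ), mul_pow]
    field_simp
  have hprox_branch : ‖xprox - xstar‖ ^ 2 + γ ^ 2 / p ^ 2 * ‖hprox' - f' xstar‖ ^ 2 ≤ ‖Δ‖ ^ 2 :=
    hdual ▸ norm_sq_add_norm_sub_sq_le hfirm
  have hΔ : Δ = u + (γ - γ / p) • v := by simp only [Δ, u, v, hxhat]; module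
  have hskip : xhat - xstar = u + γ • v := by simp only [u, v, hxhat]; module
  rw [← bernoulli_mix_norm_sq u v γ p hp.ne', ← hΔ, ← hskip]
  gcongr

/-- One-step descent inequality for ProxSkip (Lemma 2 in the paper).  The expectation
over the Bernoulli(p) coin is written out explicitly as a convex combination of the
two branches (prox applied / prox skipped). -/
theorem proxskip_one_step {d : ℕ} (f : Euc d → ℝ) (f' : Euc d → Euc d)
    (ψ : Euc d → EReal) (L μ γ p : ℝ) (hL : 0 < L) (hμ : 0 < μ)
    (hgrad : ∀ x, HasGradientAt f (f' x) x)
    (hsmooth : ∀ x y, ‖f' x - f' y‖ ≤ L * ‖x - y‖)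
    (hsc : ConvexOn ℝ Set.univ fun x => f x - μ / 2 * ‖x‖ ^ 2)
    (hψ : ProperClosedConvex ψ)
    (hγ : 0 < γ) (hp : 0 < p) (hp1 : p ≤ 1)
    (xstar : Euc d)
    (hmin : ∀ y, ((f xstar : ℝ) : EReal) + ψ xstar ≤ ((f y : ℝ) : EReal) + ψ y)
    (xt ht : Euc d)
    -- one step of the algorithm:
    (xhat xprox hprox' : Euc d)
    (hxhat : xhat = xt - γ • (f' xt - ht))
    (hxprox : IsProxPt ψ (γ / p) (xhat - (γ / p) • ht) xprox)
    (hhprox : hprox' = ht + (p / γ) • (xprox - xhat)) :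
    p * (‖xprox - xstar‖ ^ 2 + γ ^ 2 / p ^ 2 * ‖hprox' - f' xstar‖ ^ 2)
      + (1 - p) * (‖xhat - xstar‖ ^ 2 + γ ^ 2 / p ^ 2 * ‖ht - f' xstar‖ ^ 2)
    ≤ ‖(xt - γ • f' xt) - (xstar - γ • f' xstar)‖ ^ 2
      + (1 - p ^ 2) * (γ ^ 2 / p ^ 2) * ‖ht - f' xstar‖ ^ 2 :=
  proxskip_one_step_general f f' ψ γ p hgrad hψ hγ hp xstar hmin xt ht xhat xprox hprox' hxhat
    hxprox hhprox
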